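/- For every real τ with 0 < τ ≤ 1/4 and every θ₀ with 0 < θ₀ < π/2, one has lim_{r→0⁺} ∫_0^{θ₀} F(r e^{iθ}, τ) · i r e^{iθ} dθ = 0 (the integral over the circular arc of radius r from angle 0 to angle θ₀ tends to 0 as r → 0⁺). -/

import Mathlib

/-!
On the arc `z = r e^{iθ}`, `0 ≤ θ ≤ θ₀ < π/2`, one has `Re (1/z) = cos θ / r ≥ cos θ₀ / r`, so the
factor `exp (-π z - π/(4z))` is at most `exp (-π cos θ₀ / (4r))`. This beats the pole `z^{-5/2}`,
while `(1 - iz)^s` stays bounded near `z = 0` whatever the exponent `s`.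
-/

open Real Complex Filter MeasureTheory intervalIntegral

noncomputable def F (τ : ℝ) (z : ℂ) : ℂ :=
  2 * (π : ℂ) * (1 + (1 / 4 : ℂ) * z ^ (-(5 : ℂ) / 2)) *
    Complex.exp (-(π : ℂ) * z - (π : ℂ) / (4 * z)) *
    (1 - Complex.I * z) ^ ((1 / 2 : ℂ) * (1 / 2 + 2 * (π : ℂ) * Complex.I / (τ : ℂ) ^ 2))

theorem tendsto_rpow_mul_exp_neg_div_nhdsGT_zero (s : ℝ) {a : ℝ} (ha : 0 < a) :
    Tendsto (fun r : ℝ => r ^ s * Real.exp (-a / r)) (nhdsWithin 0 (Set.Ioi 0)) (nhds 0) := by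
  refine ((tendsto_rpow_mul_exp_neg_mul_atTop_nhds_zero (-s) a ha).comp
    tendsto_inv_nhdsGT_zero).congr' ?_
  filter_upwards [self_mem_nhdsWithin] with r (hr : 0 < r)
  simp only [Function.comp_apply, Real.inv_rpow hr.le, ← Real.rpow_neg hr.le, neg_neg,
    div_eq_mul_inv]

theorem eventually_norm_one_sub_I_mul_cpow_lt_two (s : ℂ) :
    ∀ᶠ z in nhds (0 : ℂ), ‖(1 - Complex.I * z) ^ s‖ < 2 := by
  have hcont : ContinuousAt (fun z : ℂ => (1 - Complex.I * z) ^ s) 0 :=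
    (continuousAt_cpow_const (by simp)).comp (by fun_prop)
  exact hcont.norm.eventually (gt_mem_nhds (by simp))

theorem norm_exp_neg_pi_mul_sub_le {c : ℝ} (hc : 0 ≤ c) {z : ℂ} (hz : c * ‖z‖ ≤ z.re) :
    ‖Complex.exp (-(π : ℂ) * z - (π : ℂ) / (4 * z))‖ ≤ Real.exp (-(π * c / 4) / ‖z‖) := by
  rcases eq_or_ne z 0 with rfl | hz0
  · simp
  have hnorm : 0 < ‖z‖ := norm_pos_iff.mpr hz0
  have hre : (-(π : ℂ) * z - (π : ℂ) / (4 * z)).re = -π * z.re - π / 4 * (z.re / ‖z‖ ^ 2) := by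
    rw [show -(π : ℂ) * z - π / (4 * z) = ((-π : ℝ) : ℂ) * z - ((π / 4 : ℝ) : ℂ) * z⁻¹ by
        push_cast; ring,
      sub_re, re_ofReal_mul, re_ofReal_mul, inv_re, normSq_eq_norm_sq]
  rw [Complex.norm_exp, hre, Real.exp_le_exp]
  have hre_nonneg : 0 ≤ z.re := (mul_nonneg hc hnorm.le).trans hz
  have hsector : c / ‖z‖ ≤ z.re / ‖z‖ ^ 2 := by
    rw [div_le_div_iff₀ hnorm (by positivity)]
    nlinarith
  calc -π * z.re - π / 4 * (z.re / ‖z‖ ^ 2) ≤ -(π / 4) * (c / ‖z‖) := by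
        nlinarith [pi_pos, mul_nonneg pi_pos.le hre_nonneg]
    _ = -(π * c / 4) / ‖z‖ := by ring

theorem norm_one_add_mul_cpow_le (a : ℂ) (x : ℝ) (z : ℂ) :
    ‖1 + a * z ^ (x : ℂ)‖ ≤ 1 + ‖a‖ * ‖z‖ ^ x := by
  simpa [norm_cpow_real] using norm_add_le (1 : ℂ) (a * z ^ (x : ℂ))

theorem exists_norm_F_le (τ : ℝ) {c : ℝ} (hc : 0 ≤ c) :
    ∃ ε > 0, ∀ z : ℂ, ‖z‖ < ε → c * ‖z‖ ≤ z.re →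
      ‖F τ z‖ ≤ 4 * π * (1 + ‖z‖ ^ (-(5 : ℝ) / 2) / 4) * Real.exp (-(π * c / 4) / ‖z‖) := by
  obtain ⟨ε, hε, hball⟩ := Metric.eventually_nhds_iff.mp
    (eventually_norm_one_sub_I_mul_cpow_lt_two
      ((1 / 2 : ℂ) * (1 / 2 + 2 * (π : ℂ) * Complex.I / (τ : ℂ) ^ 2)))
  refine ⟨ε, hε, fun z hzε hz => ?_⟩
  have hpole : ‖1 + (1 / 4 : ℂ) * z ^ (-(5 : ℂ) / 2)‖ ≤ 1 + ‖z‖ ^ (-(5 : ℝ) / 2) / 4 := by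
    have h := norm_one_add_mul_cpow_le (1 / 4) (-(5 : ℝ) / 2) z
    push_cast at h
    norm_num at h ⊢
    linarith
  have hcpow := (hball (by simpa using hzε)).le
  have hexp := norm_exp_neg_pi_mul_sub_le hc hz
  rw [F, norm_mul, norm_mul, norm_mul, norm_mul, Complex.norm_two, Complex.norm_real,
    Real.norm_of_nonneg pi_pos.le]
  calc 2 * π * ‖1 + (1 / 4 : ℂ) * z ^ (-(5 : ℂ) / 2)‖ *
        ‖Complex.exp (-(π : ℂ) * z - (π : ℂ) / (4 * z))‖ * ‖_‖
      ≤ 2 * π * (1 + ‖z‖ ^ (-(5 : ℝ) / 2) / 4) * Real.exp (-(π * c / 4) / ‖z‖) * 2 := by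
        gcongr
    _ = _ := by ring

theorem norm_arc_integral_le {f : ℂ → ℂ} {r θ₀ M : ℝ} (hr : 0 ≤ r) (hθ₀ : 0 ≤ θ₀)
    (hf : ∀ θ ∈ Set.Icc 0 θ₀, ‖f (r * Complex.exp (Complex.I * θ))‖ ≤ M) :
    ‖∫ θ in (0 : ℝ)..θ₀, f (r * Complex.exp (Complex.I * θ)) *
        (Complex.I * r * Complex.exp (Complex.I * θ))‖ ≤ M * r * θ₀ := by
  have h := norm_integral_le_of_norm_le_const (a := 0) (b := θ₀) (C := M * r)
      (f := fun θ : ℝ => f (r * Complex.exp (Complex.I * θ)) *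
        (Complex.I * r * Complex.exp (Complex.I * θ))) fun θ hθ => by
    rw [Set.uIoc_of_le hθ₀] at hθ
    rw [norm_mul, norm_mul, norm_mul, Complex.norm_exp_I_mul_ofReal, Complex.norm_I,
      Complex.norm_real, Real.norm_of_nonneg hr, one_mul, mul_one]
    exact mul_le_mul_of_nonneg_right (hf θ (Set.Ioc_subset_Icc_self hθ)) hr
  rwa [sub_zero, abs_of_nonneg hθ₀] at h

theorem norm_ofReal_mul_exp_I_mul {r : ℝ} (hr : 0 ≤ r) (θ : ℝ) :
    ‖(r : ℂ) * Complex.exp (Complex.I * θ)‖ = r := by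
  rw [norm_mul, Complex.norm_exp_I_mul_ofReal, Complex.norm_real, Real.norm_of_nonneg hr, mul_one]

theorem cos_mul_norm_le_re_arc {r θ₀ θ : ℝ} (hr : 0 ≤ r) (hθ₀ : θ₀ ≤ π)
    (hθ : θ ∈ Set.Icc 0 θ₀) :
    Real.cos θ₀ * ‖(r : ℂ) * Complex.exp (Complex.I * θ)‖ ≤
      ((r : ℂ) * Complex.exp (Complex.I * θ)).re := by
  rw [norm_ofReal_mul_exp_I_mul hr, Complex.re_ofReal_mul, mul_comm Complex.I,
    Complex.exp_ofReal_mul_I_re, mul_comm]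
  exact mul_le_mul_of_nonneg_left
    (Real.cos_le_cos_of_nonneg_of_le_pi hθ.1 hθ₀ hθ.2) hr

theorem statement10_general (τ : ℝ) (θ₀ : ℝ)
    (hθ₀0 : 0 < θ₀) (hθ₀ : θ₀ < π / 2) :
    Tendsto
      (fun r : ℝ => ∫ θ in (0 : ℝ)..θ₀,
        F τ ((r : ℂ) * Complex.exp (Complex.I * (θ : ℂ))) *
          (Complex.I * (r : ℂ) * Complex.exp (Complex.I * (θ : ℂ))))
      (nhdsWithin 0 (Set.Ioi 0)) (nhds 0) := by
  set c := Real.cos θ₀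
  have hc : 0 < c := Real.cos_pos_of_mem_Ioo ⟨by linarith, hθ₀⟩
  have ha : 0 < π * c / 4 := by positivity
  obtain ⟨ε, hε, hF⟩ := exists_norm_F_le τ hc.le
  set g : ℝ → ℝ := fun r =>
    4 * π * (1 + r ^ (-(5 : ℝ) / 2) / 4) * Real.exp (-(π * c / 4) / r) * r * θ₀
  have hg : Tendsto g (nhdsWithin 0 (Set.Ioi 0)) (nhds 0) := by
    have h := (((tendsto_rpow_mul_exp_neg_div_nhdsGT_zero 0 ha).add
      ((tendsto_rpow_mul_exp_neg_div_nhdsGT_zero (-(5 : ℝ) / 2) ha).div_const 4)).const_mul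
      (4 * π)).mul (tendsto_nhdsWithin_of_tendsto_nhds tendsto_id) |>.mul_const θ₀
    simp only [zero_div, add_zero, mul_zero, zero_mul] at h
    refine h.congr fun r => ?_
    simp only [g, Real.rpow_zero, id]
    ring
  refine squeeze_zero_norm' ?_ hg
  filter_upwards [Ioo_mem_nhdsGT hε] with r ⟨hr0, hrε⟩
  refine norm_arc_integral_le hr0.le hθ₀0.le fun θ hθ => ?_
  have hnorm := norm_ofReal_mul_exp_I_mul hr0.le θ
  simpa only [hnorm] using hF _ (by rwa [hnorm])
    (cos_mul_norm_le_re_arc hr0.le (by linarith [pi_pos]) hθ)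

theorem statement10 (τ : ℝ) (hτ0 : 0 < τ) (hτ : τ ≤ 1 / 4) (θ₀ : ℝ)
    (hθ₀0 : 0 < θ₀) (hθ₀ : θ₀ < π / 2) :
    Tendsto
      (fun r : ℝ => ∫ θ in (0 : ℝ)..θ₀,
        F τ ((r : ℂ) * Complex.exp (Complex.I * (θ : ℂ))) *
          (Complex.I * (r : ℂ) * Complex.exp (Complex.I * (θ : ℂ))))
      (nhdsWithin 0 (Set.Ioi 0)) (nhds 0) :=
  statement10_general τ θ₀ hθ₀0 hθ₀
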